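/- arXiv:1703.03849 — 3 statements merged into one kernel-verified Lean document; each statement's English description precedes it below -/
import Mathlib

section
/- Let H = (V, E) be a hypergraph, k a positive integer, and e, e' ∈ E distinct edges. If γ_H(e) ≥ k (e is k-strong) and e' is k-weak (γ_H(e') < k), then γ_{H ∖ e'}(e) = γ_H(e); that is, deleting a k-weak edge does not change the strength of a k-strong edge. -/
/- A hypergraph on a finite vertex type `V` is given by a multiset `E` of edges,
each edge a `Finset V` (with at least 2 vertices, stated as a hypothesis). -/

variable {V : Type*} [Fintype V] [DecidableEq V]

/-- `δ_H(A)`: the (multiset of) edges of `E` crossing the cut `A`. -/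
def cutEdges (E : Multiset (Finset V)) (A : Finset V) : Multiset (Finset V) :=
  E.filter (fun e => (e ∩ A).Nonempty ∧ (e \ A).Nonempty)

/-- Edge multiset of the subhypergraph `H[U]` induced on `U`. -/
def induced (E : Multiset (Finset V)) (U : Finset V) : Multiset (Finset V) :=
  E.filter (fun e => e ⊆ U)

/-- Edge-connectivity `λ(H[U])`: the minimum number of edges of `H[U]` crossing a
nonempty proper subset `A ⊊ U`. -/
noncomputable def lam (E : Multiset (Finset V)) (U : Finset V) : ℕ :=
  sInf {k : ℕ | ∃ A : Finset V, A ⊆ U ∧ A.Nonempty ∧ A ≠ U ∧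
    k = Multiset.card (cutEdges (induced E U) A)}

/-- Strength `γ_H(e)`: the maximum of `λ(H[U])` over all `U` with `e ⊆ U ⊆ V`. -/
noncomputable def strength (E : Multiset (Finset V)) (e : Finset V) : ℕ :=
  (Finset.univ.powerset.filter (fun U => e ⊆ U)).sup (lam E)

/-- The graph on `V` joining two distinct vertices that lie in a common edge of `E`;
its connectivity notions are those of the hypergraph. -/
def toGraph (E : Multiset (Finset V)) : SimpleGraph V where
  Adj u v := u ≠ v ∧ ∃ e ∈ E, u ∈ e ∧ v ∈ e
  symm := by constructor; rintro u v ⟨h, e, he, hu, hv⟩; exact ⟨h.symm, e, he, hv, hu⟩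
  loopless := by constructor; rintro v ⟨h, -⟩; exact h rfl

/-- `κ(H)`: the number of connected components of the hypergraph. -/
noncomputable def kappa (E : Multiset (Finset V)) : ℕ :=
  Nat.card (toGraph E).ConnectedComponent

/-- The vertex map contracting the edge `e'` to its representative vertex `v0 ∈ e'`. -/
def contractMap (e' : Finset V) (v0 : V) : V → V := fun u => if u ∈ e' then v0 else u

/-- The hypergraph `H/e'` obtained by contracting the edge `e'` (to the representative
vertex `v0 ∈ e'`): edges contained in `e'` are removed, all other edges are replaced by
their image under the contraction. -/
def contract (E : Multiset (Finset V)) (e' : Finset V) (v0 : V) : Multiset (Finset V) :=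
  (E.filter (fun f => ¬ f ⊆ e')).map (fun f => f.image (contractMap e' v0))

/-- The degree of a vertex: the number of edges (with multiplicity) containing it. -/
def degree (E : Multiset (Finset V)) (v : V) : ℕ :=
  Multiset.card (E.filter (fun e => v ∈ e))

/- A vertex set `U ⊇ e` attaining the strength of `e` has `λ(H[U]) = γ_H(e) ≥ k > γ_H(e')`,
so `e' ⊄ U`. Hence `H[U]` and `(H ∖ e')[U]` coincide, giving `γ_{H ∖ e'}(e) ≥ γ_H(e)`; the
reverse inequality holds because strength is monotone under deleting edges. -/

omit [Fintype V] in
lemma lam_mono {E' E : Multiset (Finset V)} (h : E' ≤ E) (U : Finset V) :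
    lam E' U ≤ lam E U := by
  unfold lam
  by_cases hne : {k : ℕ | ∃ A : Finset V, A ⊆ U ∧ A.Nonempty ∧ A ≠ U ∧
      k = Multiset.card (cutEdges (induced E U) A)}.Nonempty
  · obtain ⟨A, hAU, hA, hAU', hcard⟩ := Nat.sInf_mem hne
    rw [hcard]
    refine le_trans (Nat.sInf_le (m := Multiset.card (cutEdges (induced E' U) A))
      ⟨A, hAU, hA, hAU', rfl⟩) ?_
    exact Multiset.card_le_card (Multiset.filter_le_filter _ (Multiset.filter_le_filter _ h))
  · -- No proper nonempty `A ⊊ U` exists, so both infima are `sInf ∅ = 0`.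
    have hne' : ¬ {k : ℕ | ∃ A : Finset V, A ⊆ U ∧ A.Nonempty ∧ A ≠ U ∧
        k = Multiset.card (cutEdges (induced E' U) A)}.Nonempty := by
      rintro ⟨-, A, hAU, hA, hAU', -⟩
      exact hne ⟨_, A, hAU, hA, hAU', rfl⟩
    rw [Set.not_nonempty_iff_eq_empty] at hne hne'
    simp [hne, hne']

omit [Fintype V] in
lemma induced_erase_of_not_subset (E : Multiset (Finset V)) {e' U : Finset V} (h : ¬ e' ⊆ U) :
    induced (E.erase e') U = induced E U := by
  by_cases he' : e' ∈ E
  · conv_rhs => rw [← Multiset.cons_erase he']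
    unfold induced
    rw [Multiset.filter_cons_of_neg (p := fun f => f ⊆ U) _ h]
  · rw [Multiset.erase_of_notMem he']

omit [Fintype V] in
lemma lam_erase_of_not_subset (E : Multiset (Finset V)) {e' U : Finset V} (h : ¬ e' ⊆ U) :
    lam (E.erase e') U = lam E U := by
  unfold lam
  rw [induced_erase_of_not_subset E h]

lemma lam_le_strength (E : Multiset (Finset V)) {e U : Finset V} (h : e ⊆ U) :
    lam E U ≤ strength E e :=
  Finset.le_sup (f := lam E)
    (Finset.mem_filter.mpr ⟨Finset.mem_powerset.mpr (Finset.subset_univ U), h⟩)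

lemma exists_lam_eq_strength (E : Multiset (Finset V)) (e : Finset V) :
    ∃ U, e ⊆ U ∧ lam E U = strength E e := by
  obtain ⟨U, hU, hsup⟩ := Finset.exists_mem_eq_sup _
    ⟨Finset.univ, Finset.mem_filter.mpr ⟨Finset.mem_powerset_self _, Finset.subset_univ e⟩⟩ (lam E)
  exact ⟨U, (Finset.mem_filter.mp hU).2, hsup.symm⟩

lemma strength_mono {E' E : Multiset (Finset V)} (h : E' ≤ E) (e : Finset V) :
    strength E' e ≤ strength E e :=
  Finset.sup_mono_fun fun U _ => lam_mono h U

lemma strength_erase_of_strength_lt {E : Multiset (Finset V)} {e e' : Finset V}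
    (hlt : strength E e' < strength E e) :
    strength (E.erase e') e = strength E e := by
  refine (strength_mono (Multiset.erase_le _ _) e).antisymm ?_
  obtain ⟨U, heU, hU⟩ := exists_lam_eq_strength E e
  have he'U : ¬ e' ⊆ U := fun h => (lam_le_strength E h).not_gt (hU ▸ hlt)
  calc strength E e = lam (E.erase e') U := by rw [lam_erase_of_not_subset E he'U, hU]
    _ ≤ strength (E.erase e') e := lam_le_strength _ heU

theorem strength_delete_weak_eq_general (E : Multiset (Finset V))
    (k : ℕ) (e e' : Finset V)
    (hstrong : k ≤ strength E e) (hweak : strength E e' < k) :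
    strength (E.erase e') e = strength E e :=
  strength_erase_of_strength_lt (hweak.trans_le hstrong)

/-- deleting a `k`-weak edge `e'` does not change the strength of a
`k`-strong edge `e`. -/
theorem strength_delete_weak_eq (E : Multiset (Finset V)) (hE : ∀ e ∈ E, 2 ≤ e.card)
    (k : ℕ) (hk : 0 < k) (e e' : Finset V) (he : e ∈ E) (he' : e' ∈ E) (hne : e ≠ e')
    (hstrong : k ≤ strength E e) (hweak : strength E e' < k) :
    strength (E.erase e') e = strength E e :=
  strength_delete_weak_eq_general E k e e' hstrong hweak
end

section
/- For every hypergraph H = (V, E) on n vertices and every positive integer k, there exists a subset E' ⊆ E with |E'| ≤ k·(n − 1) that is a k-sparse certificate of H; that is, setting H' = (V, E'), for every A ⊆ V it holds that |δ_{H'}(A)| ≥ min(|δ_H(A)|, k). -/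
/- A hypergraph on a finite vertex type `V` is given by a multiset `E` of edges,
each edge a `Finset V` (with at least 2 vertices, stated as a hypothesis). -/

variable {V : Type*} [Fintype V] [DecidableEq V]

/-!
Peel off `k` spanning forests one after the other. A forest `F` is built greedily from the
edges of `E`: an edge is taken when it joins two components of the forest built so far, which
happens at most `n - 1` times since each such edge lowers the number of components. Every edge
left over has its vertices connected by `F`, so a cut crossed by a left-over edge is crossed by
some edge of `F`. After `k` rounds, either no left-over edge crosses `A`, and then all of
`δ_H(A)` was kept, or one does, and then each of the `k` forests contributes an edge to the cut.
-/

open Multiset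

theorem SimpleGraph.ConnectedComponent.card_lt_card_of_le_of_reachable {α : Type*} [Finite α]
    {G G' : SimpleGraph α} (h : G ≤ G') {u v : α} (hG : ¬ G.Reachable u v)
    (hG' : G'.Reachable u v) :
    Nat.card G'.ConnectedComponent < Nat.card G.ConnectedComponent := by
  classical
  cases nonempty_fintype α
  rw [Nat.card_eq_fintype_card, Nat.card_eq_fintype_card]
  refine Fintype.card_lt_of_surjective_not_injective _ (surjective_map_ofLE h) fun hinj => hG ?_
  exact ConnectedComponent.exact (hinj (by simpa using ConnectedComponent.sound hG'))

section Reachability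

omit [Fintype V] [DecidableEq V]

theorem toGraph_mono {E E' : Multiset (Finset V)} (h : E ≤ E') : toGraph E ≤ toGraph E' := by
  rintro u v ⟨hne, e, he, hu, hv⟩
  exact ⟨hne, e, subset_of_le h he, hu, hv⟩

def Spans (F : Multiset (Finset V)) (f : Finset V) : Prop :=
  ∀ u ∈ f, ∀ v ∈ f, (toGraph F).Reachable u v

theorem Spans.mono {F F' : Multiset (Finset V)} {f : Finset V} (hf : Spans F f) (h : F ≤ F') :
    Spans F' f :=
  fun u hu v hv => (hf u hu v hv).mono (toGraph_mono h)

end Reachability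

section Cuts

omit [Fintype V]

theorem cutEdges_add (E E' : Multiset (Finset V)) (A : Finset V) :
    cutEdges (E + E') A = cutEdges E A + cutEdges E' A :=
  filter_add _ _ _

theorem card_cutEdges_pos_of_reachable {F : Multiset (Finset V)} {A : Finset V} {u v : V}
    (h : (toGraph F).Reachable u v) (hu : u ∈ A) (hv : v ∉ A) : 0 < card (cutEdges F A) := by
  obtain ⟨w⟩ := h
  induction w with
  | nil => exact absurd hu hv
  | @cons a b c hab p ih =>
    by_cases hb : b ∈ A
    · exact ih hb hv
    · obtain ⟨-, f, hf, ha, hbf⟩ := hab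
      refine card_pos_iff_exists_mem.2 ⟨f, mem_filter.2 ⟨hf, ?_, ?_⟩⟩
      exacts [⟨a, Finset.mem_inter.2 ⟨ha, hu⟩⟩, ⟨b, Finset.mem_sdiff.2 ⟨hbf, hb⟩⟩]

theorem Spans.card_cutEdges_pos {F R : Multiset (Finset V)} {f A : Finset V} (hf : Spans F f)
    (hfA : f ∈ cutEdges R A) : 0 < card (cutEdges F A) := by
  obtain ⟨-, ⟨u, hu⟩, ⟨v, hv⟩⟩ := mem_filter.1 hfA
  rw [Finset.mem_inter] at hu
  rw [Finset.mem_sdiff] at hv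
  exact card_cutEdges_pos_of_reachable (hf u hu.1 v hv.1) hu.2 hv.2

end Cuts

section Components

omit [DecidableEq V]

theorem kappa_zero : kappa (0 : Multiset (Finset V)) = Fintype.card V := by
  have hbot : toGraph (0 : Multiset (Finset V)) = ⊥ := by
    ext u v
    simp [toGraph]
  rw [kappa, hbot, ← Nat.card_eq_fintype_card]
  exact (Nat.card_eq_of_bijective (⊥ : SimpleGraph V).connectedComponentMk
    ⟨fun a b hab => SimpleGraph.reachable_bot.1 (SimpleGraph.ConnectedComponent.exact hab),
     fun C => C.exists_rep⟩).symm

theorem kappa_pos [Nonempty V] (E : Multiset (Finset V)) : 0 < kappa E :=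
  have : Nonempty (toGraph E).ConnectedComponent :=
    .map (toGraph E).connectedComponentMk inferInstance
  Nat.card_pos

theorem kappa_cons_lt {E : Multiset (Finset V)} {e : Finset V} {u v : V} (hu : u ∈ e)
    (hv : v ∈ e) (h : ¬ (toGraph E).Reachable u v) : kappa (e ::ₘ E) < kappa E := by
  have huv : u ≠ v := fun huv => h (huv ▸ .refl u)
  exact SimpleGraph.ConnectedComponent.card_lt_card_of_le_of_reachable
    (toGraph_mono (le_cons_self E e)) h
    (SimpleGraph.Adj.reachable ⟨huv, e, mem_cons_self e E, hu, hv⟩)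

theorem card_le_of_card_add_kappa_le {F : Multiset (Finset V)}
    (h : card F + kappa F ≤ Fintype.card V) : card F ≤ Fintype.card V - 1 := by
  rcases isEmpty_or_nonempty V with hV | hV
  · rw [Fintype.card_eq_zero] at h ⊢
    omega
  · have := kappa_pos F
    omega

theorem exists_spanning_forest (E : Multiset (Finset V)) :
    ∃ F R : Multiset (Finset V), F + R = E ∧ card F + kappa F ≤ Fintype.card V ∧
      ∀ f ∈ R, Spans F f := by
  induction E using Multiset.induction_on with
  | empty => exact ⟨0, 0, rfl, by simp [kappa_zero], by simp⟩
  | cons e E ih =>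
    obtain ⟨F, R, rfl, hF, hR⟩ := ih
    by_cases he : Spans F e
    · exact ⟨F, e ::ₘ R, add_cons .., hF, forall_mem_cons.2 ⟨he, hR⟩⟩
    · obtain ⟨u, hu, v, hv, huv⟩ : ∃ u ∈ e, ∃ v ∈ e, ¬ (toGraph F).Reachable u v := by
        simpa [Spans] using he
      refine ⟨e ::ₘ F, R, cons_add .., ?_, fun f hf => (hR f hf).mono (le_cons_self F e)⟩
      have := kappa_cons_lt hu hv huv
      rw [card_cons]
      omega

end Components

theorem exists_forest_packing (k : ℕ) (E : Multiset (Finset V)) :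
    ∃ F R : Multiset (Finset V), F + R = E ∧ card F ≤ k * (Fintype.card V - 1) ∧
      ∀ A, cutEdges R A ≠ 0 → k ≤ card (cutEdges F A) := by
  induction k generalizing E with
  | zero => exact ⟨0, E, zero_add E, by simp, by simp⟩
  | succ k ih =>
    obtain ⟨F₁, R₁, rfl, hF₁, hR₁⟩ := exists_spanning_forest E
    obtain ⟨F₂, R₂, rfl, hF₂, hR₂⟩ := ih R₁
    refine ⟨F₁ + F₂, R₂, add_assoc .., ?_, fun A hA => ?_⟩
    · have := card_le_of_card_add_kappa_le hF₁
      rw [card_add, Nat.succ_mul]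
      omega
    · obtain ⟨f, hf⟩ := exists_mem_of_ne_zero hA
      have := (hR₁ f (mem_add.2 (.inr (mem_of_mem_filter hf)))).card_cutEdges_pos hf
      rw [cutEdges_add, card_add]
      have := hR₂ A hA
      omega

theorem sparse_certificate_exists_general (E : Multiset (Finset V)) (k : ℕ) :
    ∃ E' : Multiset (Finset V), E' ≤ E ∧
      Multiset.card E' ≤ k * (Fintype.card V - 1) ∧
      ∀ A : Finset V,
        min (Multiset.card (cutEdges E A)) k ≤ Multiset.card (cutEdges E' A) := by
  obtain ⟨F, R, rfl, hF, hR⟩ := exists_forest_packing k E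
  refine ⟨F, le_add_right F R, hF, fun A => ?_⟩
  by_cases hA : cutEdges R A = 0
  · simp [cutEdges_add, hA]
  · exact (min_le_right _ _).trans (hR A hA)

/-- every hypergraph has a `k`-sparse certificate `E' ⊆ E` with at most
`k·(n-1)` edges: every cut of `H' = (V, E')` has value at least `min(|δ_H(A)|, k)`. -/
theorem sparse_certificate_exists (E : Multiset (Finset V))
    (hE : ∀ e ∈ E, 2 ≤ e.card) (k : ℕ) (hk : 0 < k) :
    ∃ E' : Multiset (Finset V), E' ≤ E ∧
      Multiset.card E' ≤ k * (Fintype.card V - 1) ∧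
      ∀ A : Finset V,
        min (Multiset.card (cutEdges E A)) k ≤ Multiset.card (cutEdges E' A) :=
  sparse_certificate_exists_general E k
end

section
/- For n ≥ 3, let H be the hypergraph on vertices {v_1, …, v_n} whose edges are e = {v_1, v_2} together with the edges {v_1, v_2, v_i} for 3 ≤ i ≤ n, and let G be the multigraph obtained from H by keeping e and replacing each edge {v_1, v_2, v_i} by the star centered at v_1 spanning its vertices, i.e., by the two parallel-counted edges {v_1, v_2} and {v_1, v_i}. Then γ_H(e) = 1 while γ_G(e) = n − 1; that is, replacing hyperedges by stars can distort edge strength by a factor of n − 1 even for rank-3 hypergraphs. -/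
/- A hypergraph on a finite vertex type `V` is given by a multiset `E` of edges,
each edge a `Finset V` (with at least 2 vertices, stated as a hypothesis). -/

variable {V : Type*} [Fintype V] [DecidableEq V]

/-!
Every vertex `w` outside `e = {v₁, v₂}` lies in at most one edge, of `H` and of `G` alike, so any
`U ⊋ e` is disconnected by cutting off such a `w` with at most one edge: `λ(H[U]) ≤ 1`. Hence
the strength of `e` is attained at `U = e`, where `λ` is just the multiplicity of `e`: `1` in `H`
but `n - 1` in `G`, where every star contributes a copy of `e`.
-/

section

variable {α : Type*} [DecidableEq α]

lemma lam_le_card_cutEdges (E : Multiset (Finset α)) {U A : Finset α} (hAU : A ⊆ U)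
    (hA : A.Nonempty) (hAne : A ≠ U) :
    lam E U ≤ Multiset.card (cutEdges (induced E U) A) :=
  Nat.sInf_le ⟨A, hAU, hA, hAne, rfl⟩

lemma cutEdges_induced_pair (E : Multiset (Finset α)) {u v : α} {A : Finset α}
    (hAU : A ⊆ {u, v}) (hA : A.Nonempty) (hAne : A ≠ {u, v}) :
    cutEdges (induced E {u, v}) A = E.filter ({u, v} = ·) := by
  rw [cutEdges, induced, Multiset.filter_filter]
  refine Multiset.filter_congr fun e _ => ⟨fun ⟨⟨⟨x, hx⟩, ⟨y, hy⟩⟩, heU⟩ => ?_, ?_⟩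
  · rw [Finset.mem_inter] at hx
    rw [Finset.mem_sdiff] at hy
    have hcard : 1 < e.card := Finset.one_lt_card.2 ⟨x, hx.1, y, hy.1, fun h => hy.2 (h ▸ hx.2)⟩
    exact (Finset.eq_of_subset_of_card_le heU (Finset.card_le_two.trans hcard)).symm
  · rintro rfl
    refine ⟨⟨by rwa [Finset.inter_eq_right.2 hAU], ?_⟩, subset_rfl⟩
    exact Finset.sdiff_nonempty.2 fun h => hAne (Finset.Subset.antisymm hAU h)

lemma lam_pair (E : Multiset (Finset α)) {u v : α} (huv : u ≠ v) :
    lam E {u, v} = E.count {u, v} := by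
  have hcut : ∀ A : Finset α, A ⊆ {u, v} → A.Nonempty → A ≠ {u, v} →
      Multiset.card (cutEdges (induced E {u, v}) A) = E.count {u, v} := fun A hAU hA hAne => by
    rw [cutEdges_induced_pair E hAU hA hAne, Multiset.count_eq_card_filter_eq]
  have hu : ({u} : Finset α) ≠ {u, v} := fun h =>
    huv (Finset.mem_singleton.1 (h ▸ Finset.mem_insert_of_mem (Finset.mem_singleton_self v))).symm
  have hsub : ({u} : Finset α) ⊆ {u, v} := Finset.singleton_subset_iff.2 (Finset.mem_insert_self _ _)
  refine le_antisymm ?_ (le_csInf ⟨_, {u}, hsub, Finset.singleton_nonempty u, hu, rfl⟩ ?_)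
  · exact (lam_le_card_cutEdges E hsub (Finset.singleton_nonempty u) hu).trans_eq
      (hcut _ hsub (Finset.singleton_nonempty u) hu)
  · rintro k ⟨A, hAU, hA, hAne, rfl⟩
    exact (hcut A hAU hA hAne).ge

lemma lam_le_degree (E : Multiset (Finset α)) {U : Finset α} {i w : α}
    (hi : i ∈ U) (hw : w ∈ U) (hwi : w ≠ i) :
    lam E U ≤ degree E i := by
  have hne : (U.erase i).Nonempty := ⟨w, Finset.mem_erase.2 ⟨hwi, hw⟩⟩
  refine (lam_le_card_cutEdges E (U.erase_subset i) hne
    (fun h => Finset.notMem_erase i U (h.symm ▸ hi))).trans (Multiset.card_le_card ?_)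
  rw [cutEdges, induced, Multiset.filter_filter]
  refine Multiset.monotone_filter_right _ fun e ⟨⟨_, x, hx⟩, heU⟩ => ?_
  rw [Finset.mem_sdiff, Finset.mem_erase, not_and_or, not_not] at hx
  obtain ⟨hxe, rfl | hxU⟩ := hx
  · exact hxe
  · exact absurd (heU hxe) hxU

def triangleFan (u v : α) (S : Finset α) : Multiset (Finset α) :=
  {u, v} ::ₘ S.val.map fun i => {u, v, i}

def starFan (u v : α) (S : Finset α) : Multiset (Finset α) :=
  {u, v} ::ₘ S.val.bind fun i => {{u, v}, {u, i}}

variable {u v : α} {S : Finset α}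

lemma count_triangleFan (hS : Disjoint S {u, v}) : (triangleFan u v S).count {u, v} = 1 := by
  simp only [triangleFan, Multiset.count_cons_self, Multiset.count_map, Nat.add_eq_right,
    Multiset.card_eq_zero, Multiset.filter_eq_nil, Finset.mem_val]
  intro i hi h
  exact Finset.disjoint_left.1 hS hi (h ▸ by simp)

lemma count_starFan (hS : v ∉ S) : (starFan u v S).count {u, v} = S.card + 1 := by
  simp only [starFan, Multiset.insert_eq_cons, Multiset.bind_cons, Multiset.map_const',
    Finset.card_val, Multiset.bind_singleton, Multiset.count_cons_self, Multiset.count_add,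
    Multiset.count_replicate_self, Nat.add_right_cancel_iff, Nat.add_eq_left,
    Multiset.count_eq_zero, Multiset.mem_map, Finset.mem_val, not_exists, not_and]
  intro i hi h
  have hv : v ∈ ({u, i} : Finset α) := h ▸ by simp
  have hi' : i ∈ ({u, v} : Finset α) := h ▸ by simp
  simp only [Finset.mem_insert, Finset.mem_singleton] at hv hi'
  grind

lemma degree_triangleFan_le_one {w : α} (hwu : w ≠ u) (hwv : w ≠ v) :
    degree (triangleFan u v S) w ≤ 1 := by
  simp only [degree, triangleFan, Finset.mem_insert, hwu, Finset.mem_singleton, hwv, or_self,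
    not_false_eq_true, Multiset.filter_cons_of_neg, Multiset.filter_map, Function.comp_apply,
    false_or, Multiset.card_map]
  rw [← Multiset.count_eq_card_filter_eq]
  exact Multiset.nodup_iff_count_le_one.1 S.nodup w

lemma degree_starFan_le_one {w : α} (hwu : w ≠ u) (hwv : w ≠ v) :
    degree (starFan u v S) w ≤ 1 := by
  simp only [degree, starFan, Multiset.insert_eq_cons, Multiset.bind_cons, Multiset.map_const',
    Finset.card_val, Multiset.bind_singleton, Finset.mem_insert, hwu, Finset.mem_singleton, hwv,
    or_self, not_false_eq_true, Multiset.filter_cons_of_neg, Multiset.filter_add,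
    Multiset.filter_map, Function.comp_apply, false_or, Multiset.card_add, Multiset.card_map]
  have hpair : (Multiset.replicate S.card ({u, v} : Finset α)).filter (w ∈ ·) = 0 :=
    Multiset.filter_eq_nil.2 fun e he => by simp [Multiset.eq_of_mem_replicate he, hwu, hwv]
  rw [hpair, ← Multiset.count_eq_card_filter_eq]
  simpa using Multiset.nodup_iff_count_le_one.1 S.nodup w

end

section

variable {u v : V} {S : Finset V}

lemma strength_eq_lam_of_forall_ssuperset (E : Multiset (Finset V)) {e : Finset V}
    (h : ∀ U, e ⊂ U → lam E U ≤ lam E e) :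
    strength E e = lam E e := by
  refine le_antisymm (Finset.sup_le fun U hU => ?_) (Finset.le_sup (by simp))
  rw [Finset.mem_filter] at hU
  obtain rfl | hlt := hU.2.eq_or_ssubset
  · exact le_rfl
  · exact h U hlt

theorem strength_pair_eq_count (E : Multiset (Finset V)) (huv : u ≠ v)
    (hdeg : ∀ w, w ≠ u → w ≠ v → degree E w ≤ E.count {u, v}) :
    strength E {u, v} = E.count {u, v} := by
  refine (strength_eq_lam_of_forall_ssuperset E fun U hU => ?_).trans (lam_pair E huv)
  obtain ⟨w, hwU, hw⟩ := Finset.exists_of_ssubset hU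
  rw [Finset.mem_insert, Finset.mem_singleton, not_or] at hw
  rw [lam_pair E huv]
  exact (lam_le_degree E hwU (hU.subset (Finset.mem_insert_self u {v})) (Ne.symm hw.1)).trans
    (hdeg w hw.1 hw.2)

theorem strength_triangleFan (huv : u ≠ v) (hS : Disjoint S {u, v}) :
    strength (triangleFan u v S) {u, v} = 1 := by
  have hcount := count_triangleFan (u := u) hS
  rw [strength_pair_eq_count _ huv fun w hwu hwv => hcount ▸ degree_triangleFan_le_one hwu hwv,
    hcount]

theorem strength_starFan (huv : u ≠ v) (hS : v ∉ S) :
    strength (starFan u v S) {u, v} = S.card + 1 := by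
  have hcount := count_starFan (u := u) hS
  rw [strength_pair_eq_count _ huv fun w hwu hwv =>
    hcount ▸ (degree_starFan_le_one hwu hwv).trans (Nat.le_add_left 1 _), hcount]

end

theorem star_replacement_distorts_strength_general (n : ℕ)
    (v0 v1 : Fin n) (hv0 : (v0 : ℕ) = 0) (hv1 : (v1 : ℕ) = 1)
    (H G : Multiset (Finset (Fin n)))
    (hH : H = ({v0, v1} : Finset (Fin n)) ::ₘ
      ((Finset.univ.filter (fun i : Fin n => 2 ≤ (i : ℕ))).val.map
        (fun i => ({v0, v1, i} : Finset (Fin n)))))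
    (hG : G = ({v0, v1} : Finset (Fin n)) ::ₘ
      ((Finset.univ.filter (fun i : Fin n => 2 ≤ (i : ℕ))).val.bind
        (fun i => {({v0, v1} : Finset (Fin n)), ({v0, i} : Finset (Fin n))}))) :
    strength H {v0, v1} = 1 ∧ strength G {v0, v1} = n - 1 := by
  have hv01 : v0 ≠ v1 := fun h => by simp [Fin.ext_iff, hv0, hv1] at h
  set S := Finset.univ.filter fun i : Fin n => 2 ≤ (i : ℕ)
  have hS : S = {v0, v1}ᶜ := by
    ext i
    simp only [S, Finset.mem_filter, Finset.mem_univ, true_and, Finset.mem_compl,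
      Finset.mem_insert, Finset.mem_singleton, Fin.ext_iff, hv0, hv1]
    omega
  have hcard : S.card + 1 = n - 1 := by
    rw [hS, Finset.card_compl, Fintype.card_fin, Finset.card_pair hv01]
    have := v1.isLt
    omega
  refine ⟨hH ▸ strength_triangleFan hv01 (hS ▸ disjoint_compl_left), ?_⟩
  rw [hG, ← hcard]
  exact strength_starFan hv01 (by simp [hS])

/-- for `n ≥ 3`, the hypergraph `H` on `{v_0, …, v_{n-1}}` with the edge
`e = {v₀, v₁}` together with the edges `{v₀, v₁, vᵢ}` for `2 ≤ i ≤ n-1` has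
`γ_H(e) = 1`, whereas the multigraph `G` obtained by replacing each `{v₀, v₁, vᵢ}`
with the star centered at `v₀` (the two edges `{v₀, v₁}` and `{v₀, vᵢ}`) has
`γ_G(e) = n - 1`. -/
theorem star_replacement_distorts_strength (n : ℕ) (hn : 3 ≤ n)
    (v0 v1 : Fin n) (hv0 : (v0 : ℕ) = 0) (hv1 : (v1 : ℕ) = 1)
    (H G : Multiset (Finset (Fin n)))
    (hH : H = ({v0, v1} : Finset (Fin n)) ::ₘ
      ((Finset.univ.filter (fun i : Fin n => 2 ≤ (i : ℕ))).val.map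
        (fun i => ({v0, v1, i} : Finset (Fin n)))))
    (hG : G = ({v0, v1} : Finset (Fin n)) ::ₘ
      ((Finset.univ.filter (fun i : Fin n => 2 ≤ (i : ℕ))).val.bind
        (fun i => {({v0, v1} : Finset (Fin n)), ({v0, i} : Finset (Fin n))}))) :
    strength H {v0, v1} = 1 ∧ strength G {v0, v1} = n - 1 :=
  star_replacement_distorts_strength_general n v0 v1 hv0 hv1 H G hH hG
end
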